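/- arXiv:2006.02849 — 4 statements merged into one kernel-verified Lean document; each statement's English description precedes it below -/
import Mathlib

section
/- The map q : ℝ₊* × ℝⁿ → ℝⁿ, (α, z) ↦ projection of z onto the closed ball B(0, α), is Lipschitz continuous: there is a constant L such that |q(α₁, z₁) − q(α₂, z₂)| ≤ L(|α₁ − α₂| + |z₁ − z₂|) for all α₁, α₂ > 0 and z₁, z₂ ∈ ℝⁿ. -/
/-!
The projection onto the ball `B(0, α)` is radial: `q(α, z) = min ‖z‖ α • (z / ‖z‖)`. Changing `α`
moves the point along the unit vector `z / ‖z‖` by at most `|α₁ - α₂|`. For fixed `α ≥ 0`, `q(α, ·)`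
is the metric projection onto a closed convex set, characterised by the variational inequality
`⟪z - q z, y - q z⟫ ≤ 0` for `y` in the ball; adding the inequalities at two points gives
`‖q z₁ - q z₂‖² ≤ ⟪z₁ - z₂, q z₁ - q z₂⟫`, so `q(α, ·)` is nonexpansive. Hence `L = 1` works.
-/

/-- The Euclidean projection of `z ∈ ℝⁿ` onto the closed ball `B(0, α)`. -/
noncomputable def ballProj {n : ℕ} (α : ℝ) (z : EuclideanSpace ℝ (Fin n)) :
    EuclideanSpace ℝ (Fin n) :=
  if ‖z‖ ≤ α then z else (α / ‖z‖) • z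

open scoped RealInnerProductSpace

theorem lipschitzWith_one_of_inner_sub_le_zero {E : Type*} [NormedAddCommGroup E]
    [InnerProductSpace ℝ E] {K : Set E} {P : E → E} (hPK : ∀ x, P x ∈ K)
    (hP : ∀ x, ∀ y ∈ K, ⟪x - P x, y - P x⟫ ≤ 0) : LipschitzWith 1 P := by
  refine LipschitzWith.mk_one fun x y => ?_
  rw [dist_eq_norm, dist_eq_norm]
  have hx := hP x (P y) (hPK y)
  have hy := hP y (P x) (hPK x)
  have hsq : ‖P x - P y‖ ^ 2 ≤ ⟪x - y, P x - P y⟫ := by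
    have hsum : ⟪x - y, P x - P y⟫ - ‖P x - P y‖ ^ 2
        = -⟪x - P x, P y - P x⟫ - ⟪y - P y, P x - P y⟫ := by
      rw [← real_inner_self_eq_norm_sq]
      simp only [inner_sub_left, inner_sub_right, real_inner_comm]
      ring
    linarith
  have hcs := real_inner_le_norm (x - y) (P x - P y)
  nlinarith [norm_nonneg (P x - P y), norm_nonneg (x - y)]

namespace ballProj

variable {n : ℕ}

theorem eq_min_smul (α : ℝ) (z : EuclideanSpace ℝ (Fin n)) :
    ballProj α z = min ‖z‖ α • (‖z‖⁻¹ • z) := by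
  unfold ballProj
  split_ifs with h
  · rcases eq_or_ne z 0 with rfl | hz
    · simp
    · rw [min_eq_left h, smul_inv_smul₀ (norm_ne_zero_iff.mpr hz)]
  · rw [min_eq_right (not_le.mp h).le, smul_smul, div_eq_mul_inv]

theorem norm_le {α : ℝ} (hα : 0 ≤ α) (z : EuclideanSpace ℝ (Fin n)) : ‖ballProj α z‖ ≤ α := by
  unfold ballProj
  split_ifs with h
  · exact h
  · have hz : 0 < ‖z‖ := hα.trans_lt (not_le.mp h)
    rw [norm_smul, Real.norm_of_nonneg (by positivity), div_mul_cancel₀ _ hz.ne']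

theorem inner_sub_le_zero (α : ℝ) (z : EuclideanSpace ℝ (Fin n)) {y : EuclideanSpace ℝ (Fin n)}
    (hy : ‖y‖ ≤ α) : ⟪z - ballProj α z, y - ballProj α z⟫ ≤ 0 := by
  unfold ballProj
  split_ifs with h
  · simp
  · have hz : 0 < ‖z‖ := (norm_nonneg y).trans_lt (hy.trans_lt (not_le.mp h))
    have hc : α / ‖z‖ ≤ 1 := (div_le_one hz).mpr (not_le.mp h).le
    have hzy : ⟪z, y⟫ ≤ α * ‖z‖ := by
      nlinarith [real_inner_le_norm z y, norm_nonneg z]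
    have hexpand : ⟪z - (α / ‖z‖) • z, y - (α / ‖z‖) • z⟫
        = (1 - α / ‖z‖) * (⟪z, y⟫ - α * ‖z‖) := by
      have hfactor : z - (α / ‖z‖) • z = (1 - α / ‖z‖) • z := by rw [sub_smul, one_smul]
      rw [hfactor, real_inner_smul_left, inner_sub_right, real_inner_smul_right,
        real_inner_self_eq_norm_sq]
      field_simp
    rw [hexpand]
    exact mul_nonpos_of_nonneg_of_nonpos (by linarith) (by linarith)

theorem lipschitzWith_one {α : ℝ} (hα : 0 ≤ α) : LipschitzWith 1 (ballProj (n := n) α) :=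
  lipschitzWith_one_of_inner_sub_le_zero (K := {y | ‖y‖ ≤ α}) (norm_le hα)
    fun z _ hy => inner_sub_le_zero α z hy

theorem norm_sub_le_abs_sub (α₁ α₂ : ℝ) (z : EuclideanSpace ℝ (Fin n)) :
    ‖ballProj α₁ z - ballProj α₂ z‖ ≤ |α₁ - α₂| := by
  have hmin : |min ‖z‖ α₁ - min ‖z‖ α₂| ≤ |α₁ - α₂| := by
    simpa using abs_min_sub_min_le_max ‖z‖ α₁ ‖z‖ α₂
  have hunit : ‖‖z‖⁻¹ • z‖ ≤ 1 := by
    rw [norm_smul, norm_inv, norm_norm]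
    exact inv_mul_le_one
  rw [eq_min_smul, eq_min_smul, ← sub_smul, norm_smul, Real.norm_eq_abs]
  calc |min ‖z‖ α₁ - min ‖z‖ α₂| * ‖‖z‖⁻¹ • z‖ ≤ |α₁ - α₂| * 1 :=
        mul_le_mul hmin hunit (norm_nonneg _) (abs_nonneg _)
    _ = |α₁ - α₂| := mul_one _

end ballProj

/-- The map `(α, z) ↦ q(α, z)` (projection onto the ball of radius `α`) is Lipschitz
continuous on `ℝ₊* × ℝⁿ`. -/
theorem ballProj_lipschitz {n : ℕ} :
    ∃ L : ℝ, ∀ α₁ α₂ : ℝ, 0 < α₁ → 0 < α₂ →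
      ∀ z₁ z₂ : EuclideanSpace ℝ (Fin n),
        ‖ballProj α₁ z₁ - ballProj α₂ z₂‖ ≤ L * (|α₁ - α₂| + ‖z₁ - z₂‖) := by
  refine ⟨1, fun α₁ α₂ _ h₂ z₁ z₂ => ?_⟩
  have hz : ‖ballProj α₂ z₁ - ballProj α₂ z₂‖ ≤ ‖z₁ - z₂‖ := by
    simpa [dist_eq_norm] using (ballProj.lipschitzWith_one h₂.le).dist_le_mul z₁ z₂
  calc ‖ballProj α₁ z₁ - ballProj α₂ z₂‖
      ≤ ‖ballProj α₁ z₁ - ballProj α₂ z₁‖ + ‖ballProj α₂ z₁ - ballProj α₂ z₂‖ :=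
        norm_sub_le_norm_sub_add_norm_sub _ _ _
    _ ≤ 1 * (|α₁ - α₂| + ‖z₁ - z₂‖) := by
        rw [one_mul]
        exact add_le_add (ballProj.norm_sub_le_abs_sub α₁ α₂ z₁) hz
end

section
/- The map q : ℝ₊* × ℝⁿ → ℝⁿ (projection onto the ball of radius α) is directionally differentiable: for every (α, z) with α > 0 and every direction (β, h) ∈ ℝ × ℝⁿ, the limit dq((α,z);(β,h)) := lim_{t→0⁺} (q(α+tβ, z+th) − q(α,z))/t exists and equals h if |z| < α; equals h − max₊(h·(z/|z|) − β)·(z/|z|) if |z| = α; and equals (α/|z|)(h − (z·h)z/|z|²) + β z/|z| if |z| > α. -/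
open Filter Topology

/-- The directional derivative of the ball projection `q` at `(α, z)` in the direction
`(β, h)`. -/
noncomputable def ballProjDeriv {n : ℕ} (α : ℝ) (z : EuclideanSpace ℝ (Fin n)) (β : ℝ)
    (h : EuclideanSpace ℝ (Fin n)) : EuclideanSpace ℝ (Fin n) :=
  if ‖z‖ < α then h
  else if ‖z‖ = α then
    h - (max 0 ((inner ℝ h (‖z‖⁻¹ • z) : ℝ) - β)) • (‖z‖⁻¹ • z)
  else (α / ‖z‖) • (h - ((‖z‖ ^ 2)⁻¹ * (inner ℝ z h : ℝ)) • z) + (β / ‖z‖) • z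

/-!
Along the line `t ↦ (α + tβ, z + th)` the projection is `z + th` while `‖z + th‖ ≤ α + tβ`,
and the radial retraction `((α + tβ) / ‖z + th‖) (z + th)` otherwise; the latter is
differentiable in `t` when `z ≠ 0`. Off the sphere `‖z‖ = α` only one branch is active for small
`t > 0`. On the sphere the gap `‖z + th‖ - (α + tβ)` vanishes at `t = 0` with derivative
`a = ⟪h, z/‖z‖⟫ - β`, so the first branch is eventually active if `a < 0` and the second if
`a > 0`. The second branch has derivative `h - a z/‖z‖`, which equals the first branch's `h`
when `a = 0`.
-/

open scoped RealInnerProductSpace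

theorem hasDerivAt_line {E : Type*} [NormedAddCommGroup E] [NormedSpace ℝ E] (z h : E) (s : ℝ) :
    HasDerivAt (fun t : ℝ => z + t • h) h s := by
  simpa using ((hasDerivAt_id s).smul_const h).const_add z

section InnerProductSpace

variable {F : Type*} [NormedAddCommGroup F] [InnerProductSpace ℝ F]

theorem HasDerivAt.norm {f : ℝ → F} {f' : F} {x : ℝ} (hf : HasDerivAt f f' x) (h0 : f x ≠ 0) :
    HasDerivAt (fun t => ‖f t‖) (⟪f x, f'⟫ / ‖f x‖) x := by
  have hsq : ‖f x‖ ^ 2 ≠ 0 := pow_ne_zero 2 (norm_ne_zero_iff.mpr h0)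
  convert hf.norm_sq.sqrt hsq using 1
  · simp only [Real.sqrt_sq (norm_nonneg _)]
  · rw [Real.sqrt_sq (norm_nonneg _)]
    field_simp

theorem hasDerivAt_norm_line_sub {z : F} (h : F) (α β : ℝ) (hz : z ≠ 0) :
    HasDerivAt (fun t : ℝ => ‖z + t • h‖ - (α + t * β)) (⟪h, ‖z‖⁻¹ • z⟫ - β) 0 := by
  have hnorm := (hasDerivAt_line z h 0).norm (by simpa using hz)
  have hlin : HasDerivAt (fun t : ℝ => α + t * β) β 0 := hasDerivAt_line α β 0
  refine (hnorm.sub hlin).congr_deriv ?_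
  simp only [zero_smul, add_zero, real_inner_smul_right, real_inner_comm h z]
  ring

noncomputable def radialRetraction (r : ℝ) (x : F) : F := (r / ‖x‖) • x

theorem radialRetraction_of_norm_eq {r : ℝ} {x : F} (hx : ‖x‖ = r) (hr : r ≠ 0) :
    radialRetraction r x = x := by
  rw [radialRetraction, hx, div_self hr, one_smul]

theorem hasDerivAt_radialRetraction_line {z : F} (h : F) (α β : ℝ) (hz : z ≠ 0) :
    HasDerivAt (fun t : ℝ => radialRetraction (α + t * β) (z + t • h))
      ((α / ‖z‖) • (h - ((‖z‖ ^ 2)⁻¹ * ⟪z, h⟫) • z) + (β / ‖z‖) • z) 0 := by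
  have hz' : ‖z‖ ≠ 0 := norm_ne_zero_iff.mpr hz
  have hlin : HasDerivAt (fun t : ℝ => α + t * β) β 0 := hasDerivAt_line α β 0
  have hnorm := (hasDerivAt_line z h 0).norm (by simpa using hz)
  refine ((hlin.div hnorm (by simpa using hz')).smul (hasDerivAt_line z h 0)).congr_deriv ?_
  simp only [zero_smul, add_zero, zero_mul, Pi.div_apply]
  match_scalars <;> field_simp
  ring

theorem hasDerivAt_radialRetraction_line_of_norm_eq {z : F} (h : F) {α : ℝ} (β : ℝ)
    (hz : ‖z‖ = α) (hz0 : z ≠ 0) :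
    HasDerivAt (fun t : ℝ => radialRetraction (α + t * β) (z + t • h))
      (h - (⟪h, ‖z‖⁻¹ • z⟫ - β) • (‖z‖⁻¹ • z)) 0 := by
  refine (hasDerivAt_radialRetraction_line h α β hz0).congr_deriv ?_
  have hz' : ‖z‖ ≠ 0 := norm_ne_zero_iff.mpr hz0
  subst hz
  rw [real_inner_smul_right, real_inner_comm]
  match_scalars <;> field_simp
  ring

end InnerProductSpace

theorem eventually_pos_of_hasDerivAt {φ : ℝ → ℝ} {φ' x : ℝ} (hφ : HasDerivAt φ φ' x)
    (h0 : φ x = 0) (hφ' : 0 < φ') : ∀ᶠ t in 𝓝[>] x, 0 < φ t := by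
  filter_upwards [eventually_nhdsWithin_of_eventually_nhds
    (eventually_nhdsWithin_sign_eq_of_deriv_pos (hφ.deriv ▸ hφ') h0), self_mem_nhdsWithin]
    with t hsign ht
  rw [sign_pos (sub_pos.mpr ht)] at hsign
  exact sign_eq_one_iff.mp hsign

theorem eventually_neg_of_hasDerivAt {φ : ℝ → ℝ} {φ' x : ℝ} (hφ : HasDerivAt φ φ' x)
    (h0 : φ x = 0) (hφ' : φ' < 0) : ∀ᶠ t in 𝓝[>] x, φ t < 0 := by
  filter_upwards [eventually_nhdsWithin_of_eventually_nhds
    (eventually_nhdsWithin_sign_eq_of_deriv_neg (hφ.deriv ▸ hφ') h0), self_mem_nhdsWithin]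
    with t hsign ht
  rw [sign_neg (sub_neg.mpr ht)] at hsign
  exact sign_eq_neg_one_iff.mp hsign

section BallProjection

variable {n : ℕ} {α β : ℝ} {z h : EuclideanSpace ℝ (Fin n)}

theorem ballProj_of_norm_le (hz : ‖z‖ ≤ α) : ballProj α z = z := if_pos hz

theorem ballProj_of_lt_norm (hz : α < ‖z‖) : ballProj α z = radialRetraction α z :=
  if_neg hz.not_ge

theorem tendsto_ballProj_slope_of_norm_lt (hz : ‖z‖ < α) :
    Tendsto (fun t : ℝ => t⁻¹ • (ballProj (α + t * β) (z + t • h) - ballProj α z)) (𝓝[>] 0)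
      (𝓝 h) := by
  have hin : ∀ᶠ t in 𝓝 (0 : ℝ), ‖z + t • h‖ < α + t * β :=
    ContinuousAt.eventually_lt (by fun_prop) (by fun_prop) (by simpa using hz)
  refine tendsto_const_nhds.congr' ?_
  filter_upwards [eventually_nhdsWithin_of_eventually_nhds hin, self_mem_nhdsWithin]
    with t hin ht
  rw [ballProj_of_norm_le hin.le, ballProj_of_norm_le hz.le, add_sub_cancel_left,
    inv_smul_smul₀ (ne_of_gt ht)]

theorem tendsto_ballProj_slope_of_lt_norm (hα : 0 ≤ α) (hz : α < ‖z‖) :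
    Tendsto (fun t : ℝ => t⁻¹ • (ballProj (α + t * β) (z + t • h) - ballProj α z)) (𝓝[>] 0)
      (𝓝 ((α / ‖z‖) • (h - ((‖z‖ ^ 2)⁻¹ * ⟪z, h⟫) • z) + (β / ‖z‖) • z)) := by
  have hz0 : z ≠ 0 := norm_pos_iff.mp (hα.trans_lt hz)
  have hout : ∀ᶠ t in 𝓝 (0 : ℝ), α + t * β < ‖z + t • h‖ :=
    ContinuousAt.eventually_lt (by fun_prop) (by fun_prop) (by simpa using hz)
  refine (hasDerivAt_radialRetraction_line h α β hz0).tendsto_slope_zero_right.congr' ?_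
  filter_upwards [eventually_nhdsWithin_of_eventually_nhds hout] with t hout
  rw [ballProj_of_lt_norm hout, ballProj_of_lt_norm hz]
  simp only [zero_add, zero_mul, add_zero, zero_smul]

theorem tendsto_ballProj_slope_of_norm_eq (hα : 0 < α) (hz : ‖z‖ = α) :
    Tendsto (fun t : ℝ => t⁻¹ • (ballProj (α + t * β) (z + t • h) - ballProj α z)) (𝓝[>] 0)
      (𝓝 (h - max 0 (⟪h, ‖z‖⁻¹ • z⟫ - β) • (‖z‖⁻¹ • z))) := by
  have hz0 : z ≠ 0 := norm_pos_iff.mp (hz ▸ hα)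
  set a := ⟪h, ‖z‖⁻¹ • z⟫ - β
  have hgap := hasDerivAt_norm_line_sub h α β hz0
  have hgap0 : ‖z + (0 : ℝ) • h‖ - (α + 0 * β) = 0 := by simp [hz]
  have hretr :=
    (hasDerivAt_radialRetraction_line_of_norm_eq h β hz hz0).tendsto_slope_zero_right
  have hquot : ∀ᶠ t in 𝓝[>] (0 : ℝ),
      (if ‖z + t • h‖ ≤ α + t * β then h else
        t⁻¹ • (radialRetraction (α + (0 + t) * β) (z + (0 + t) • h) -
          radialRetraction (α + 0 * β) (z + (0 : ℝ) • h))) =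
      t⁻¹ • (ballProj (α + t * β) (z + t • h) - ballProj α z) := by
    filter_upwards [self_mem_nhdsWithin] with t ht
    rw [ballProj_of_norm_le hz.le]
    split_ifs with hin
    · rw [ballProj_of_norm_le hin, add_sub_cancel_left, inv_smul_smul₀ (ne_of_gt ht)]
    · rw [ballProj_of_lt_norm (not_le.mp hin)]
      simp only [zero_add, zero_mul, add_zero, zero_smul, radialRetraction_of_norm_eq hz hα.ne']
  refine (Tendsto.if ?_ ?_).congr' hquot
  · rcases le_or_gt a 0 with ha | ha
    · rw [max_eq_left ha, zero_smul, sub_zero]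
      exact tendsto_const_nhds
    · have hout := eventually_pos_of_hasDerivAt hgap hgap0 ha
      refine tendsto_bot.mono_left (inf_principal_eq_bot.mpr ?_).le
      exact hout.mono fun t ht => not_le.mpr (sub_pos.mp ht)
  · rcases le_or_gt 0 a with ha | ha
    · rw [max_eq_right ha]
      exact tendsto_inf_left hretr
    · have hin := eventually_neg_of_hasDerivAt hgap hgap0 ha
      refine tendsto_bot.mono_left (inf_principal_eq_bot.mpr ?_).le
      exact hin.mono fun t ht => not_not.mpr (sub_neg.mp ht).le

end BallProjection

/-- Directional differentiability of the ball projection `q : ℝ₊* × ℝⁿ → ℝⁿ`: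
the one-sided difference quotients converge to the stated directional derivative. -/
theorem ballProj_dirDiff {n : ℕ} (α : ℝ) (hα : 0 < α) (z : EuclideanSpace ℝ (Fin n))
    (β : ℝ) (h : EuclideanSpace ℝ (Fin n)) :
    Tendsto (fun t : ℝ => t⁻¹ • (ballProj (α + t * β) (z + t • h) - ballProj α z))
      (𝓝[>] (0 : ℝ)) (𝓝 (ballProjDeriv α z β h)) := by
  rcases lt_trichotomy ‖z‖ α with hlt | heq | hgt
  · rw [ballProjDeriv, if_pos hlt]
    exact tendsto_ballProj_slope_of_norm_lt hlt
  · rw [ballProjDeriv, if_neg heq.not_lt, if_pos heq]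
    exact tendsto_ballProj_slope_of_norm_eq hα heq
  · rw [ballProjDeriv, if_neg hgt.not_gt, if_neg hgt.ne']
    exact tendsto_ballProj_slope_of_lt_norm hα.le hgt
end

section
/- For all α > 0, z ∈ ℝⁿ, β ∈ ℝ and h ∈ ℝⁿ, the directional derivative of the ball projection satisfies the bound |dq((α, z); (β, h))| ≤ |β| + |h|. -/
open Submodule RealInnerProductSpace

section

variable {𝕜 E : Type*} [RCLike 𝕜] [NormedAddCommGroup E] [InnerProductSpace 𝕜 E]

theorem Submodule.norm_sub_starProjection_apply_le (K : Submodule 𝕜 E)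
    [K.HasOrthogonalProjection] (h : E) : ‖h - K.starProjection h‖ ≤ ‖h‖ := by
  rw [← starProjection_orthogonal_val]
  exact Kᗮ.norm_starProjection_apply_le h

end

variable {E : Type*} [NormedAddCommGroup E] [InnerProductSpace ℝ E]

theorem norm_sub_inner_div_smul_le (z h : E) :
    ‖h - ((‖z‖ ^ 2)⁻¹ * ⟪z, h⟫) • z‖ ≤ ‖h‖ := by
  simpa [starProjection_singleton, div_eq_inv_mul, mul_comm] using
    (ℝ ∙ z).norm_sub_starProjection_apply_le h

theorem norm_sub_max_inner_sub_smul_le {u : E} (hu : ‖u‖ = 1) (β : ℝ) (h : E) :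
    ‖h - max 0 (⟪h, u⟫ - β) • u‖ ≤ |β| + ‖h‖ := by
  rcases le_total (⟪h, u⟫ - β) 0 with hle | hge
  · simp [max_eq_left hle]
  · have hproj := norm_sub_inner_div_smul_le u h
    rw [hu, one_pow, inv_one, one_mul, real_inner_comm] at hproj
    calc ‖h - max 0 (⟪h, u⟫ - β) • u‖ = ‖(h - ⟪h, u⟫ • u) + β • u‖ := by
          rw [max_eq_right hge, sub_smul, sub_sub_eq_add_sub, add_sub_right_comm]
      _ ≤ ‖h‖ + |β| := by
          grw [norm_add_le, hproj, norm_smul, hu, Real.norm_eq_abs, mul_one]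
      _ = |β| + ‖h‖ := add_comm _ _

theorem norm_smul_sub_inner_div_smul_add_div_smul_le {α : ℝ} {z : E} (hα : 0 ≤ α)
    (hαz : α ≤ ‖z‖) (β : ℝ) (h : E) :
    ‖(α / ‖z‖) • (h - ((‖z‖ ^ 2)⁻¹ * ⟪z, h⟫) • z) + (β / ‖z‖) • z‖ ≤ |β| + ‖h‖ := by
  have hratio : α / ‖z‖ ≤ 1 := div_le_one_of_le₀ hαz (norm_nonneg z)
  have hradial : ‖(β / ‖z‖) • z‖ ≤ |β| := by
    rcases eq_or_ne z 0 with rfl | hz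
    · simp
    · rw [norm_smul, Real.norm_eq_abs, abs_div, abs_norm,
        div_mul_cancel₀ _ (norm_ne_zero_iff.mpr hz)]
  calc _ ≤ α / ‖z‖ * ‖h - ((‖z‖ ^ 2)⁻¹ * ⟪z, h⟫) • z‖ + |β| := by
        grw [norm_add_le, norm_smul, Real.norm_of_nonneg (by positivity), hradial]
    _ ≤ 1 * ‖h‖ + |β| := by grw [hratio, norm_sub_inner_div_smul_le]
    _ = |β| + ‖h‖ := by ring

/-- Bound on the directional derivative of the ball projection:
`|dq((α, z); (β, h))| ≤ |β| + |h|`. -/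
theorem ballProjDeriv_bound {n : ℕ} (α : ℝ) (hα : 0 < α)
    (z : EuclideanSpace ℝ (Fin n)) (β : ℝ) (h : EuclideanSpace ℝ (Fin n)) :
    ‖ballProjDeriv α z β h‖ ≤ |β| + ‖h‖ := by
  unfold ballProjDeriv
  split_ifs with hlt heq
  · exact le_add_of_nonneg_left (abs_nonneg β)
  · have hz : z ≠ 0 := norm_ne_zero_iff.mp (heq ▸ hα.ne')
    exact norm_sub_max_inner_sub_smul_le (norm_smul_inv_norm hz) β h
  · exact norm_smul_sub_inner_div_smul_add_div_smul_le hα.le (not_lt.mp hlt) β h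
end

section
/- Let S be a measure space with finite measure and let max₊ denote the Nemytskij (superposition) operator on L²(S) induced by the positive part function, i.e. (max₊ u)(x) = max(0, u(x)). Then this operator L²(S) → L²(S) is Lipschitz continuous with constant 1, and directionally differentiable: for all u, v ∈ L²(S), (max₊(u + t v) − max₊(u))/t converges strongly in L²(S) as t → 0⁺ to the function d max₊(u; v) defined pointwise by 0 where u < 0, max(0, v) where u = 0, and v where u > 0. -/
open Filter Topology MeasureTheory
open scoped ENNReal

/-!
Pointwise, `max 0` is 1-Lipschitz, so the Lipschitz bound holds under the integral. For fixed
`a, b` the difference quotient `(max 0 (a + t b) - max 0 a) / t` is bounded by `|b|` and is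
eventually constant as `t → 0⁺`: for `a ≠ 0` the sign of `a + t b` is eventually that of `a`,
and for `a = 0` positive homogeneity gives `max 0 b` for every `t > 0`. Hence the
difference quotients of `u + t v` converge pointwise with the dominating function `2 |v| ∈ Lᵖ`,
and dominated convergence for `∫ ‖·‖ᵖ` yields convergence in `Lᵖ`.
-/

theorem tendsto_eLpNorm_zero_of_dominated {α E ι : Type*} [MeasurableSpace α] {μ : Measure α}
    [NormedAddCommGroup E] {p : ℝ≥0∞} {l : Filter ι} [l.IsCountablyGenerated]
    {F : ι → α → E} {g : α → ℝ} (hp0 : p ≠ 0) (hp : p ≠ ∞)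
    (hF : ∀ᶠ i in l, AEStronglyMeasurable (F i) μ) (hg : MemLp g p μ)
    (hbound : ∀ᶠ i in l, ∀ᵐ x ∂μ, ‖F i x‖ ≤ g x)
    (hlim : ∀ᵐ x ∂μ, Tendsto (fun i => F i x) l (𝓝 0)) :
    Tendsto (fun i => eLpNorm (F i) p μ) l (𝓝 0) := by
  have hr : 0 < p.toReal := ENNReal.toReal_pos hp0 hp
  have hint : Tendsto (fun i => ∫⁻ x, ‖F i x‖ₑ ^ p.toReal ∂μ) l (𝓝 0) := by
    simpa using tendsto_lintegral_filter_of_dominated_convergence' (f := fun _ => 0)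
      (fun x => ‖g x‖ₑ ^ p.toReal) (hF.mono fun i hi => hi.enorm.pow_const _)
      (hbound.mono fun i hi => hi.mono fun x hx => ENNReal.rpow_le_rpow
        (enorm_le_iff_norm_le.2 (hx.trans (Real.le_norm_self _))) hr.le)
      (lintegral_rpow_enorm_lt_top_of_eLpNorm_lt_top hp0 hp hg.eLpNorm_lt_top).ne
      (hlim.mono fun x hx => by
        simpa [ENNReal.zero_rpow_of_pos hr] using hx.enorm.ennrpow_const p.toReal)
  simp_rw [eLpNorm_eq_lintegral_rpow_enorm_toReal hp0 hp]
  simpa [ENNReal.zero_rpow_of_pos (inv_pos.2 hr)] using hint.ennrpow_const (1 / p.toReal)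

theorem abs_max_zero_sub_max_zero_le (a b : ℝ) : |max 0 a - max 0 b| ≤ |a - b| := by
  rw [max_comm 0 a, max_comm 0 b]
  exact abs_max_sub_max_le_abs a b 0

noncomputable def posPartDirDeriv (a b : ℝ) : ℝ :=
  if a < 0 then 0 else if a = 0 then max 0 b else b

theorem measurable_posPartDirDeriv : Measurable fun p : ℝ × ℝ => posPartDirDeriv p.1 p.2 :=
  Measurable.ite (measurableSet_lt measurable_fst measurable_const) measurable_const <|
    Measurable.ite (measurableSet_eq_fun measurable_fst measurable_const)
      (measurable_const.max measurable_snd) measurable_snd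

theorem abs_posPartDirDeriv_le (a b : ℝ) : |posPartDirDeriv a b| ≤ |b| := by
  unfold posPartDirDeriv
  split_ifs
  · simp
  · rw [abs_of_nonneg (le_max_left 0 b)]
    exact max_le (abs_nonneg b) (le_abs_self b)
  · rfl

theorem abs_posPart_diffQuot_le (a b : ℝ) {t : ℝ} (ht : 0 < t) :
    |(max 0 (a + t * b) - max 0 a) / t| ≤ |b| := by
  rw [abs_div, abs_of_pos ht, div_le_iff₀ ht]
  calc |max 0 (a + t * b) - max 0 a| ≤ |a + t * b - a| := abs_max_zero_sub_max_zero_le _ _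
    _ = |b| * t := by rw [add_sub_cancel_left, abs_mul, abs_of_pos ht, mul_comm]

theorem posPart_diffQuot_eventuallyEq (a b : ℝ) :
    (fun t => (max 0 (a + t * b) - max 0 a) / t) =ᶠ[𝓝[>] 0] fun _ => posPartDirDeriv a b := by
  have hline : Tendsto (fun t : ℝ => a + t * b) (𝓝[>] 0) (𝓝 a) :=
    ((continuous_const.add (continuous_id.mul continuous_const)).tendsto' 0 a (by simp)).mono_left
      nhdsWithin_le_nhds
  rcases lt_trichotomy a 0 with ha | rfl | ha
  · filter_upwards [hline.eventually (gt_mem_nhds ha)] with t hneg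
    simp [posPartDirDeriv, ha, max_eq_left hneg.le, max_eq_left ha.le]
  · filter_upwards [self_mem_nhdsWithin] with t (ht : 0 < t)
    have hscale : max 0 (t * b) = t * max 0 b := by rw [mul_max_of_nonneg _ _ ht.le, mul_zero]
    rw [zero_add, hscale, max_self, sub_zero, mul_div_cancel_left₀ _ ht.ne']
    simp [posPartDirDeriv]
  · filter_upwards [self_mem_nhdsWithin, hline.eventually (lt_mem_nhds ha)]
      with t (ht : 0 < t) hpos
    rw [max_eq_right hpos.le, max_eq_right ha.le, add_sub_cancel_left,
      mul_div_cancel_left₀ _ ht.ne']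
    simp [posPartDirDeriv, ha.not_gt, ha.ne']

theorem abs_posPart_diffQuot_sub_posPartDirDeriv_le (a b : ℝ) {t : ℝ} (ht : 0 < t) :
    |(max 0 (a + t * b) - max 0 a) / t - posPartDirDeriv a b| ≤ 2 * |b| :=
  calc _ ≤ |(max 0 (a + t * b) - max 0 a) / t| + |posPartDirDeriv a b| := abs_sub _ _
    _ ≤ |b| + |b| := add_le_add (abs_posPart_diffQuot_le a b ht) (abs_posPartDirDeriv_le a b)
    _ = 2 * |b| := (two_mul _).symm

theorem tendsto_posPart_diffQuot (a b : ℝ) :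
    Tendsto (fun t => (max 0 (a + t * b) - max 0 a) / t) (𝓝[>] 0) (𝓝 (posPartDirDeriv a b)) :=
  tendsto_const_nhds.congr' (posPart_diffQuot_eventuallyEq a b).symm

section Nemytskij

variable {S : Type*} [MeasurableSpace S] {μ : Measure S} {p : ℝ≥0∞}

theorem eLpNorm_posPart_sub_posPart_le (u v : S → ℝ) :
    eLpNorm (fun x => max 0 (u x) - max 0 (v x)) p μ ≤ eLpNorm (fun x => u x - v x) p μ :=
  eLpNorm_mono fun x => abs_max_zero_sub_max_zero_le (u x) (v x)

theorem tendsto_eLpNorm_posPart_diffQuot_sub_posPartDirDeriv {u v : S → ℝ}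
    (hu : AEStronglyMeasurable u μ) (hv : MemLp v p μ) (hp0 : p ≠ 0) (hp : p ≠ ∞) :
    Tendsto (fun t : ℝ => eLpNorm (fun x => (max 0 (u x + t * v x) - max 0 (u x)) / t -
      posPartDirDeriv (u x) (v x)) p μ) (𝓝[>] 0) (𝓝 0) := by
  have hd : AEStronglyMeasurable (fun x => posPartDirDeriv (u x) (v x)) μ :=
    (measurable_posPartDirDeriv.comp_aemeasurable
      (hu.aemeasurable.prodMk hv.1.aemeasurable)).aestronglyMeasurable
  have hv_meas := hv.1
  -- `fun_prop` takes the measurability of `u`, `v` and `hd` from the context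
  refine tendsto_eLpNorm_zero_of_dominated hp0 hp (Eventually.of_forall fun t => by fun_prop)
    (hv.norm.const_mul 2) ?_ (ae_of_all _ fun x => ?_)
  · filter_upwards [self_mem_nhdsWithin] with t (ht : 0 < t)
    exact ae_of_all _ fun x => abs_posPart_diffQuot_sub_posPartDirDeriv_le (u x) (v x) ht
  · simpa using (tendsto_posPart_diffQuot (u x) (v x)).sub_const (posPartDirDeriv (u x) (v x))

end Nemytskij

theorem nemytskij_posPart_lipschitz_and_dirDiff_general
    {S : Type*} [MeasurableSpace S] (μ : Measure S) :
    (∀ u v : S → ℝ, MemLp u 2 μ → MemLp v 2 μ →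
      eLpNorm (fun x => max 0 (u x) - max 0 (v x)) 2 μ ≤
        1 * eLpNorm (fun x => u x - v x) 2 μ) ∧
    (∀ u v : S → ℝ, MemLp u 2 μ → MemLp v 2 μ →
      Tendsto
        (fun t : ℝ => eLpNorm
          (fun x => (max 0 (u x + t * v x) - max 0 (u x)) / t -
            (if u x < 0 then 0 else if u x = 0 then max 0 (v x) else v x)) 2 μ)
        (𝓝[>] (0 : ℝ)) (𝓝 0)) :=
  ⟨fun u v _ _ => (eLpNorm_posPart_sub_posPart_le u v).trans_eq (one_mul _).symm,
    fun _ _ hu hv => tendsto_eLpNorm_posPart_diffQuot_sub_posPartDirDeriv hu.1 hv two_ne_zero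
      ENNReal.ofNat_ne_top⟩

/-- The Nemytskij operator on `L²(S)` induced by the positive part function is
1-Lipschitz and directionally differentiable, the difference quotients converging
strongly in `L²` to the pointwise directional derivative of `max₊`. -/
theorem nemytskij_posPart_lipschitz_and_dirDiff
    {S : Type*} [MeasurableSpace S] (μ : Measure S) [IsFiniteMeasure μ] :
    (∀ u v : S → ℝ, MemLp u 2 μ → MemLp v 2 μ →
      eLpNorm (fun x => max 0 (u x) - max 0 (v x)) 2 μ ≤
        1 * eLpNorm (fun x => u x - v x) 2 μ) ∧
    (∀ u v : S → ℝ, MemLp u 2 μ → MemLp v 2 μ →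
      Tendsto
        (fun t : ℝ => eLpNorm
          (fun x => (max 0 (u x + t * v x) - max 0 (u x)) / t -
            (if u x < 0 then 0 else if u x = 0 then max 0 (v x) else v x)) 2 μ)
        (𝓝[>] (0 : ℝ)) (𝓝 0)) :=
  nemytskij_posPart_lipschitz_and_dirDiff_general μ
end
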